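/- Let l_1 be a based loop of duration t whose periodic extension is continuous at time r ∈ [0,t), and let l_2^o be the equivalence class (loop) of a based loop l_2. Then inf{ D(l_1, l) : l ∈ l_2^o } = inf{ D(Θ_r l_1, l) : l ∈ l_2^o }; i.e., the distance to a loop class is invariant under circular translation at a continuity point. -/

import Mathlib

open Filter Topology MeasureTheory Set

variable {S : Type*} [MetricSpace S]

/-- A based loop, represented by its periodic extension to all of `ℝ`:
a càdlàg function `f : ℝ → S` of period `len > 0`. -/
structure BasedLoop (S : Type*) [MetricSpace S] where
  f : ℝ → S
  len : ℝ
  len_pos : 0 < len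
  periodic : ∀ u, f (u + len) = f u
  rightCont : ∀ u, Tendsto f (𝓝[>] u) (𝓝 (f u))
  leftLim : ∀ u, ∃ y, Tendsto f (𝓝[<] u) (𝓝 y)

/-- `lam` is an increasing bijection of `[0,1]` onto itself. -/
def IncBij (lam : ℝ → ℝ) : Prop :=
  StrictMonoOn lam (Icc 0 1) ∧ BijOn lam (Icc 0 1) (Icc 0 1) ∧ lam 0 = 0 ∧ lam 1 = 1

/-- `sup_{s<t} |log ((lam t - lam s)/(t-s))|` over `0 ≤ s < t ≤ 1`. -/
noncomputable def supLog (lam : ℝ → ℝ) : ℝ :=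
  sSup {x | ∃ s t : ℝ, 0 ≤ s ∧ s < t ∧ t ≤ 1 ∧ x = |Real.log ((lam t - lam s) / (t - s))|}

/-- The Skorokhod-type distance on (normalized) paths over `[0,1]`. -/
noncomputable def skorDist (f g : ℝ → S) : ℝ :=
  sInf {x | ∃ lam, IncBij lam ∧
    x = supLog lam + sSup {y | ∃ u ∈ Icc (0:ℝ) 1, y = dist (f (lam u)) (g u)}}

/-- Normalization of a based loop to duration 1. -/
noncomputable def BasedLoop.normalized (l : BasedLoop S) : ℝ → S := fun u => l.f (l.len * u)

/-- The distance `D` on based loops. -/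
noncomputable def loopDist (l1 l2 : BasedLoop S) : ℝ :=
  |l1.len - l2.len| + skorDist l1.normalized l2.normalized

/-- Circular translation `Θ_r` of a based loop. -/
def BasedLoop.shift (l : BasedLoop S) (r : ℝ) : BasedLoop S where
  f := fun u => l.f (u + r)
  len := l.len
  len_pos := l.len_pos
  periodic := fun u => by simpa [add_right_comm] using l.periodic (u + r)
  rightCont := fun u => by
    have h : Tendsto (fun u' : ℝ => u' + r) (𝓝[>] u) (𝓝[>] (u + r)) := by
      apply tendsto_nhdsWithin_of_tendsto_nhds_of_eventually_within
      · exact ((continuous_id.add continuous_const).tendsto u).mono_left nhdsWithin_le_nhds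
      · filter_upwards [self_mem_nhdsWithin] with x hx
        simp only [mem_Ioi] at hx ⊢; linarith
    exact (l.rightCont (u + r)).comp h
  leftLim := fun u => by
    obtain ⟨y, hy⟩ := l.leftLim (u + r)
    refine ⟨y, hy.comp ?_⟩
    apply tendsto_nhdsWithin_of_tendsto_nhds_of_eventually_within
    · exact ((continuous_id.add continuous_const).tendsto u).mono_left nhdsWithin_le_nhds
    · filter_upwards [self_mem_nhdsWithin] with x hx
      simp only [mem_Iio] at hx ⊢; linarith

/-- Equivalence of based loops: identical up to circular translation. -/
def LoopEquiv (l1 l2 : BasedLoop S) : Prop :=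
  l1.len = l2.len ∧ ∃ r : ℝ, ∀ u, l1.f (u + r) = l2.f u

instance loopSetoid (S : Type*) [MetricSpace S] : Setoid (BasedLoop S) where
  r := LoopEquiv
  iseqv := by
    constructor
    · exact fun l => ⟨rfl, 0, fun u => by simp⟩
    · rintro a b ⟨hlen, r, hr⟩
      refine ⟨hlen.symm, -r, fun u => ?_⟩
      have h2 := hr (u - r)
      rw [sub_add_cancel] at h2
      rw [h2]; congr 1
    · rintro a b c ⟨hab, r1, h1⟩ ⟨hbc, r2, h2⟩
      refine ⟨hab.trans hbc, r2 + r1, fun u => ?_⟩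
      have := h1 (u + r2)
      rw [show u + (r2 + r1) = u + r2 + r1 by ring, this, h2]

/-- A loop is an equivalence class of based loops modulo circular translation. -/
def Loop (S : Type*) [MetricSpace S] := Quotient (loopSetoid S)

/-- The distance `Dᵒ` on loops. -/
noncomputable def loopDistO (L1 L2 : Loop S) : ℝ :=
  sInf {x | ∃ l1 l2 : BasedLoop S, ⟦l1⟧ = L1 ∧ ⟦l2⟧ = L2 ∧ x = loopDist l1 l2}

/-- The multi-occupation field `⟨l, f⟩` of a (periodically extended) path `l`
of duration `t`, for `f : Sⁿ → ℝ`. -/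
noncomputable def occField (n : ℕ) (l : ℝ → S) (t : ℝ) (f : (Fin n → S) → ℝ) : ℝ :=
  ∑ j : Fin n,
    ∫ s in {s : Fin n → ℝ | (∀ i, s i ∈ Ioo 0 t) ∧ StrictMono s},
      f (fun i => l (s (i + j)))

/-- The multi-occupation field of a loop, computed from a representative. -/
noncomputable def occFieldLoop (n : ℕ) (L : Loop S) (f : (Fin n → S) → ℝ) : ℝ :=
  occField n (Quotient.out L).f (Quotient.out L).len f

/-- Open sets of the loop space for the metric `Dᵒ`. -/
def IsOpenLoop (A : Set (Loop S)) : Prop :=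
  ∀ L ∈ A, ∃ ε > 0, ∀ L', loopDistO L L' < ε → L' ∈ A

/-!
If a time change `λ` nearly realises the Skorokhod part of `D(l₁, l)` and `λ c = r / |l₁|`,
then the time change `u ↦ λ (u + c) - λ c`, read modulo `1`, matches `Θ_r l₁` against
`Θ_{c |l|} l` at exactly the same cost: the pointwise distances are the same values, and the
log-slope of the rotated time change on an interval straddling the wrap-around point is the log
of a mediant of two slopes of `λ`. Hence shifting `l₁` never increases the distance to the class
of `l₂`; shifting `Θ_r l₁` by `|l₁| - r` gives back `l₁`, whence the reverse inequality.
-/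

def logSlopes (lam : ℝ → ℝ) : Set ℝ :=
  {x | ∃ s t : ℝ, 0 ≤ s ∧ s < t ∧ t ≤ 1 ∧ x = |Real.log ((lam t - lam s) / (t - s))|}

def pointDists (F G : ℝ → S) (lam : ℝ → ℝ) : Set ℝ :=
  {y | ∃ u ∈ Icc (0:ℝ) 1, y = dist (F (lam u)) (G u)}

noncomputable def skorCost (F G : ℝ → S) (lam : ℝ → ℝ) : ℝ :=
  sSup (logSlopes lam) + sSup (pointDists F G lam)

lemma logSlopes_congr {lam lam' : ℝ → ℝ} (h : EqOn lam lam' (Icc 0 1)) :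
    logSlopes lam = logSlopes lam' := by
  ext x
  exact exists₂_congr fun s t => and_congr_right fun hs => and_congr_right fun hst =>
    and_congr_right fun ht => by rw [h ⟨hs, hst.le.trans ht⟩, h ⟨hs.trans hst.le, ht⟩]

lemma pointDists_congr (F G : ℝ → S) {lam lam' : ℝ → ℝ} (h : EqOn lam lam' (Icc 0 1)) :
    pointDists F G lam = pointDists F G lam' := by
  ext x
  exact exists_congr fun u => and_congr_right fun hu => by rw [h hu]

lemma skorCost_nonneg (F G : ℝ → S) (lam : ℝ → ℝ) : 0 ≤ skorCost F G lam :=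
  add_nonneg (Real.sSup_nonneg <| by rintro _ ⟨s, t, -, -, -, rfl⟩; exact abs_nonneg _)
    (Real.sSup_nonneg <| by rintro _ ⟨u, -, rfl⟩; exact dist_nonneg)

lemma incBij_id : IncBij id :=
  ⟨strictMonoOn_id, bijOn_id _, rfl, rfl⟩

lemma skorDist_le_skorCost (F G : ℝ → S) {lam : ℝ → ℝ} (hl : IncBij lam) :
    skorDist F G ≤ skorCost F G lam :=
  csInf_le ⟨0, by rintro _ ⟨lam, -, rfl⟩; exact skorCost_nonneg F G lam⟩ ⟨lam, hl, rfl⟩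

lemma exists_skorCost_lt (F G : ℝ → S) {ε : ℝ} (hε : 0 < ε) :
    ∃ lam, IncBij lam ∧ skorCost F G lam < skorDist F G + ε := by
  obtain ⟨_, ⟨lam, hl, rfl⟩, hlt⟩ := Real.lt_sInf_add_pos
    (s := {x | ∃ lam, IncBij lam ∧ x = skorCost F G lam}) ⟨_, id, incBij_id, rfl⟩ hε
  exact ⟨lam, hl, hlt⟩

lemma skorDist_nonneg (F G : ℝ → S) : 0 ≤ skorDist F G :=
  Real.sInf_nonneg <| by rintro _ ⟨lam, -, rfl⟩; exact skorCost_nonneg F G lam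

lemma div_add_div_mem_uIcc {a b c d : ℝ} (hb : 0 < b) (hd : 0 < d) :
    (a + c) / (b + d) ∈ uIcc (a / b) (c / d) := by
  have hbd : 0 < b + d := by linarith
  rcases le_total (a / b) (c / d) with h | h
  · rw [div_le_div_iff₀ hb hd] at h
    exact mem_uIcc_of_le (by rw [div_le_div_iff₀ hb hbd]; nlinarith)
      (by rw [div_le_div_iff₀ hbd hd]; nlinarith)
  · rw [div_le_div_iff₀ hd hb] at h
    exact mem_uIcc_of_ge (by rw [div_le_div_iff₀ hd hbd]; nlinarith)
      (by rw [div_le_div_iff₀ hbd hb]; nlinarith)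

lemma abs_log_le_max_of_mem_uIcc {x y z : ℝ} (hx : 0 < x) (hy : 0 < y) (hz : z ∈ uIcc x y) :
    |Real.log z| ≤ max |Real.log x| |Real.log y| := by
  rcases le_total x y with h | h
  · rw [uIcc_of_le h] at hz
    exact abs_le_max_abs_abs (Real.log_le_log hx hz.1) (Real.log_le_log (hx.trans_le hz.1) hz.2)
  · rw [uIcc_of_ge h] at hz
    rw [max_comm]
    exact abs_le_max_abs_abs (Real.log_le_log hy hz.1) (Real.log_le_log (hy.trans_le hz.1) hz.2)

/-- The time change `lam` started at `c` and wrapped around modulo `1`: if `lam` matches `G`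
with `F ∘ lam`, then `rotate lam c` matches `G (· + c)` with `F (· + lam c)`. -/
noncomputable def rotate (lam : ℝ → ℝ) (c : ℝ) : ℝ → ℝ := fun u =>
  if u ≤ 1 - c then lam (u + c) - lam c else lam (u + c - 1) + 1 - lam c

section Rotate

variable {lam : ℝ → ℝ} {c u : ℝ}

lemma rotate_of_le (hu : u ≤ 1 - c) : rotate lam c u = lam (u + c) - lam c :=
  if_pos hu

lemma rotate_of_ge (hl : IncBij lam) (hu : 1 - c ≤ u) :
    rotate lam c u = lam (u + c - 1) + 1 - lam c := by
  rcases hu.eq_or_lt with rfl | hlt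
  · rw [rotate_of_le le_rfl, sub_add_cancel, sub_self, hl.2.2.1, hl.2.2.2]
    ring
  · exact if_neg hlt.not_ge

lemma rotate_zero (hc : c ∈ Icc (0:ℝ) 1) : rotate lam c 0 = 0 := by
  rw [rotate_of_le (by linarith [hc.2]), zero_add, sub_self]

lemma rotate_one (hl : IncBij lam) (hc : c ∈ Icc (0:ℝ) 1) : rotate lam c 1 = 1 := by
  rw [rotate_of_ge hl (by linarith [hc.1]), add_sub_cancel_left]
  ring

lemma strictMonoOn_rotate (hl : IncBij lam) (hc : c ∈ Icc (0:ℝ) 1) :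
    StrictMonoOn (rotate lam c) (Icc 0 1) := by
  have hm := hl.1
  intro s hs t ht hst
  rcases le_or_gt t (1 - c) with ht' | ht'
  · rw [rotate_of_le (hst.le.trans ht'), rotate_of_le ht']
    have := hm ⟨by linarith [hs.1, hc.1], by linarith⟩ ⟨by linarith [ht.1, hc.1], by linarith⟩
      (show s + c < t + c by linarith)
    linarith
  rw [rotate_of_ge hl ht'.le]
  rcases le_total (1 - c) s with hs' | hs'
  · rw [rotate_of_ge hl hs']
    have := hm ⟨by linarith, by linarith [hs.2, hc.2]⟩ ⟨by linarith, by linarith [ht.2, hc.2]⟩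
      (show s + c - 1 < t + c - 1 by linarith)
    linarith
  · rw [rotate_of_le hs']
    have h1 := hm.monotoneOn ⟨by linarith [hs.1, hc.1], by linarith⟩ (right_mem_Icc.2 zero_le_one)
      (show s + c ≤ 1 by linarith)
    have h0 := hm (left_mem_Icc.2 zero_le_one) ⟨by linarith, by linarith [ht.2, hc.2]⟩
      (show 0 < t + c - 1 by linarith)
    rw [hl.2.2.1] at h0
    rw [hl.2.2.2] at h1
    linarith

lemma incBij_rotate (hl : IncBij lam) (hc : c ∈ Icc (0:ℝ) 1) : IncBij (rotate lam c) := by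
  have hm := strictMonoOn_rotate hl hc
  have h0 := rotate_zero (lam := lam) hc
  have h1 := rotate_one hl hc
  refine ⟨hm, ⟨fun u hu => ?_, hm.injOn, fun y hy => ?_⟩, h0, h1⟩
  · have := hm.monotoneOn (left_mem_Icc.2 zero_le_one) hu hu.1
    have := hm.monotoneOn hu (right_mem_Icc.2 zero_le_one) hu.2
    exact ⟨by linarith, by linarith⟩
  have hlc := hl.2.1.1 hc
  rcases le_total y (1 - lam c) with hy' | hy'
  · obtain ⟨v, hv, hlv⟩ := hl.2.1.2.2 (show y + lam c ∈ Icc (0:ℝ) 1 from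
      ⟨by linarith [hy.1, hlc.1], by linarith⟩)
    have hcv : c ≤ v := (hl.1.le_iff_le hc hv).1 (by linarith [hy.1])
    refine ⟨v - c, ⟨by linarith, by linarith [hv.2, hc.1]⟩, ?_⟩
    rw [rotate_of_le (by linarith [hv.2]), sub_add_cancel, hlv, add_sub_cancel_right]
  · obtain ⟨v, hv, hlv⟩ := hl.2.1.2.2 (show y - 1 + lam c ∈ Icc (0:ℝ) 1 from
      ⟨by linarith, by linarith [hy.2, hlc.2]⟩)
    have hvc : v ≤ c := (hl.1.le_iff_le hv hc).1 (by linarith [hy.2])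
    refine ⟨v + 1 - c, ⟨by linarith [hv.1, hc.2], by linarith⟩, ?_⟩
    rw [rotate_of_ge hl (by linarith [hv.1]), show v + 1 - c + c - 1 = v by ring, hlv]
    ring

lemma rotate_one_sub (hl : IncBij lam) : rotate lam c (1 - c) = 1 - lam c := by
  rw [rotate_of_le le_rfl, sub_add_cancel, hl.2.2.2]

lemma rotate_rotate (hl : IncBij lam) (hc : c ∈ Icc (0:ℝ) 1) :
    EqOn (rotate (rotate lam c) (1 - c)) lam (Icc 0 1) := by
  intro u hu
  rcases le_total u c with huc | huc
  · rw [rotate_of_le (by linarith), rotate_one_sub hl, rotate_of_ge hl (by linarith [hu.1]),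
      show u + (1 - c) + c - 1 = u by ring]
    ring
  · rw [rotate_of_ge (incBij_rotate hl hc) (by linarith), rotate_one_sub hl,
      rotate_of_le (by linarith [hu.2]), show u + (1 - c) - 1 + c = u by ring]
    ring

lemma exists_ge_of_mem_logSlopes_rotate (hl : IncBij lam) (hc : c ∈ Icc (0:ℝ) 1) :
    ∀ x ∈ logSlopes (rotate lam c), ∃ y ∈ logSlopes lam, x ≤ y := by
  rintro _ ⟨s, t, hs, hst, ht, rfl⟩
  rcases le_or_gt t (1 - c) with ht' | ht'
  · refine ⟨_, ⟨s + c, t + c, by linarith [hc.1], by linarith, by linarith, rfl⟩, le_of_eq ?_⟩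
    rw [rotate_of_le (hst.le.trans ht'), rotate_of_le ht']
    congr 3 <;> ring
  rcases le_or_gt (1 - c) s with hs' | hs'
  · refine ⟨_, ⟨s + c - 1, t + c - 1, by linarith, by linarith, by linarith [hc.2], rfl⟩,
      le_of_eq ?_⟩
    rw [rotate_of_ge hl hs', rotate_of_ge hl ht'.le]
    congr 3 <;> ring
  -- `[s, t]` straddles the wrap-around point `1 - c`: split it there
  have hslope : ∀ {a b : ℝ}, a ∈ Icc (0:ℝ) 1 → b ∈ Icc (0:ℝ) 1 → a < b →
      0 < (lam b - lam a) / (b - a) :=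
    fun ha hb hab => div_pos (sub_pos.2 (hl.1 ha hb hab)) (sub_pos.2 hab)
  have hsplit : (rotate lam c t - rotate lam c s) / (t - s) =
      ((lam (t + c - 1) - lam 0) + (lam 1 - lam (s + c))) / ((t + c - 1 - 0) + (1 - (s + c))) := by
    rw [rotate_of_ge hl ht'.le, rotate_of_le hs'.le, hl.2.2.1, hl.2.2.2]
    congr 1 <;> ring
  have hmed := abs_log_le_max_of_mem_uIcc
    (hslope (left_mem_Icc.2 zero_le_one) ⟨by linarith, by linarith [hc.2]⟩ (by linarith))
    (hslope ⟨by linarith [hc.1], by linarith⟩ (right_mem_Icc.2 zero_le_one) (by linarith))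
    (div_add_div_mem_uIcc (a := lam (t + c - 1) - lam 0) (c := lam 1 - lam (s + c))
      (by linarith) (by linarith))
  rw [hsplit]
  rcases max_choice |Real.log ((lam (t + c - 1) - lam 0) / (t + c - 1 - 0))|
      |Real.log ((lam 1 - lam (s + c)) / (1 - (s + c)))| with hm | hm
  · exact ⟨_, ⟨0, t + c - 1, le_rfl, by linarith, by linarith [hc.2], rfl⟩, hm ▸ hmed⟩
  · exact ⟨_, ⟨s + c, 1, by linarith [hc.1], by linarith, le_rfl, rfl⟩, hm ▸ hmed⟩

lemma exists_ge_of_mem_pointDists_rotate {F G F' G' : ℝ → S} (hF : ∀ w, F (w + 1) = F w)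
    (hG : ∀ w, G (w + 1) = G w) (hF' : ∀ w, F' w = F (w + lam c)) (hG' : ∀ u, G' u = G (u + c))
    (hl : IncBij lam) (hc : c ∈ Icc (0:ℝ) 1) :
    ∀ x ∈ pointDists F' G' (rotate lam c), ∃ y ∈ pointDists F G lam, x ≤ y := by
  rintro _ ⟨u, hu, rfl⟩
  rcases le_total u (1 - c) with hu' | hu'
  · refine ⟨_, ⟨u + c, ⟨by linarith [hu.1, hc.1], by linarith⟩, rfl⟩, le_of_eq ?_⟩
    rw [hF', hG', rotate_of_le hu', sub_add_cancel]
  · refine ⟨_, ⟨u + c - 1, ⟨by linarith, by linarith [hu.2, hc.2]⟩, rfl⟩, le_of_eq ?_⟩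
    rw [hF', hG', rotate_of_ge hl hu', sub_add_cancel, hF, ← hG (u + c - 1), sub_add_cancel]

lemma skorCost_rotate {F G : ℝ → S} (hF : ∀ w, F (w + 1) = F w) (hG : ∀ w, G (w + 1) = G w)
    (hl : IncBij lam) (hc : c ∈ Icc (0:ℝ) 1) :
    skorCost (fun w => F (w + lam c)) (fun u => G (u + c)) (rotate lam c) = skorCost F G lam := by
  have hl' := incBij_rotate hl hc
  have hc' : 1 - c ∈ Icc (0:ℝ) 1 := ⟨by linarith [hc.2], by linarith [hc.1]⟩
  -- `sSup` of a set unbounded above is `0`, so both comparisons are needed; the second one is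
  -- the first one for the inverse rotation `rotate · (1 - c)`.
  refine congrArg₂ (· + ·) ?_ ?_
  · refine csSup_eq_csSup_of_forall_exists_le (exists_ge_of_mem_logSlopes_rotate hl hc) ?_
    rw [← logSlopes_congr (rotate_rotate hl hc)]
    exact exists_ge_of_mem_logSlopes_rotate hl' hc'
  · refine csSup_eq_csSup_of_forall_exists_le
      (exists_ge_of_mem_pointDists_rotate hF hG (fun _ => rfl) (fun _ => rfl) hl hc) ?_
    rw [← pointDists_congr F G (rotate_rotate hl hc)]
    refine exists_ge_of_mem_pointDists_rotate (fun w => by rw [add_right_comm, hF])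
      (fun u => by rw [add_right_comm, hG]) (fun w => ?_) (fun u => ?_) hl' hc'
    · rw [rotate_one_sub hl, add_assoc, sub_add_cancel, hF]
    · rw [add_assoc, sub_add_cancel, hG]

end Rotate

lemma exists_skorDist_shift_lt {F G : ℝ → S} (hF : ∀ w, F (w + 1) = F w)
    (hG : ∀ w, G (w + 1) = G w) {ρ : ℝ} (hρ : ρ ∈ Icc (0:ℝ) 1) {ε : ℝ} (hε : 0 < ε) :
    ∃ c, skorDist (fun w => F (w + ρ)) (fun u => G (u + c)) < skorDist F G + ε := by
  obtain ⟨lam, hl, hlt⟩ := exists_skorCost_lt F G hε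
  obtain ⟨c, hc, rfl⟩ := hl.2.1.2.2 hρ
  exact ⟨c, (skorDist_le_skorCost _ _ (incBij_rotate hl hc)).trans_lt
    (by rwa [skorCost_rotate hF hG hl hc])⟩

namespace BasedLoop

lemma ext {a b : BasedLoop S} (hf : a.f = b.f) (hlen : a.len = b.len) : a = b := by
  cases a; cases b; subst hf hlen; rfl

lemma shift_shift (l : BasedLoop S) (r r' : ℝ) : (l.shift r).shift r' = l.shift (r' + r) :=
  BasedLoop.ext (funext fun u => congrArg l.f (add_assoc u r' r)) rfl

lemma shift_len (l : BasedLoop S) : l.shift l.len = l :=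
  BasedLoop.ext (funext l.periodic) rfl

lemma loopEquiv_shift (l : BasedLoop S) (r : ℝ) : LoopEquiv (l.shift r) l :=
  ⟨rfl, -r, fun u => congrArg l.f (neg_add_cancel_right u r)⟩

lemma normalized_add_one (l : BasedLoop S) (w : ℝ) : l.normalized (w + 1) = l.normalized w := by
  show l.f (l.len * (w + 1)) = l.f (l.len * w)
  rw [mul_add, mul_one, l.periodic]

lemma normalized_shift (l : BasedLoop S) (r : ℝ) :
    (l.shift r).normalized = fun w => l.normalized (w + r / l.len) := by
  funext w
  show l.f (l.len * w + r) = l.f (l.len * (w + r / l.len))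
  rw [mul_add, mul_div_cancel₀ _ l.len_pos.ne']

end BasedLoop

lemma loopDist_nonneg (l1 l2 : BasedLoop S) : 0 ≤ loopDist l1 l2 :=
  add_nonneg (abs_nonneg _) (skorDist_nonneg _ _)

lemma exists_loopEquiv_loopDist_shift_lt (l₁ l : BasedLoop S) {r : ℝ} (hr : r ∈ Icc 0 l₁.len)
    {ε : ℝ} (hε : 0 < ε) : ∃ l', LoopEquiv l' l ∧ loopDist (l₁.shift r) l' < loopDist l₁ l + ε := by
  have hρ : r / l₁.len ∈ Icc (0:ℝ) 1 :=
    ⟨div_nonneg hr.1 l₁.len_pos.le, div_le_one_of_le₀ hr.2 l₁.len_pos.le⟩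
  obtain ⟨c, hc⟩ := exists_skorDist_shift_lt l₁.normalized_add_one l.normalized_add_one hρ hε
  refine ⟨l.shift (l.len * c), l.loopEquiv_shift _, ?_⟩
  rw [loopDist, loopDist, l₁.normalized_shift, l.normalized_shift,
    mul_div_cancel_left₀ _ l.len_pos.ne']
  change |l₁.len - l.len| + _ < _
  linarith

lemma sInf_loopDist_shift_le (l₁ l₂ : BasedLoop S) {r : ℝ} (hr : r ∈ Icc 0 l₁.len) :
    sInf {x | ∃ l : BasedLoop S, (loopSetoid S).r l l₂ ∧ x = loopDist (l₁.shift r) l} ≤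
      sInf {x | ∃ l : BasedLoop S, (loopSetoid S).r l l₂ ∧ x = loopDist l₁ l} := by
  have hbdd : BddBelow {x | ∃ l : BasedLoop S, (loopSetoid S).r l l₂ ∧
      x = loopDist (l₁.shift r) l} :=
    ⟨0, by rintro _ ⟨_, -, rfl⟩; exact loopDist_nonneg _ _⟩
  refine le_csInf ⟨_, l₂, Setoid.refl l₂, rfl⟩ ?_
  rintro _ ⟨l, hl, rfl⟩
  refine le_of_forall_pos_lt_add fun ε hε => ?_
  obtain ⟨l', hl', hlt⟩ := exists_loopEquiv_loopDist_shift_lt l₁ l hr hε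
  exact (csInf_le hbdd ⟨l', Setoid.trans hl' hl, rfl⟩).trans_lt hlt

theorem infDist_shift_invariant_general (l1 l2 : BasedLoop S) (r : ℝ) (hr : r ∈ Ico 0 l1.len) :
    sInf {x | ∃ l : BasedLoop S, (loopSetoid S).r l l2 ∧ x = loopDist l1 l} =
      sInf {x | ∃ l : BasedLoop S, (loopSetoid S).r l l2 ∧ x = loopDist (l1.shift r) l} := by
  have hr' : r ∈ Icc 0 l1.len := Ico_subset_Icc_self hr
  refine le_antisymm ?_ (sInf_loopDist_shift_le l1 l2 hr')
  have := sInf_loopDist_shift_le (l1.shift r) l2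
    (show l1.len - r ∈ Icc 0 l1.len from ⟨sub_nonneg.2 hr'.2, sub_le_self _ hr'.1⟩)
  rwa [BasedLoop.shift_shift, sub_add_cancel, BasedLoop.shift_len] at this

/-- If the periodic extension of `l₁` is continuous at `r ∈ [0, |l₁|)`, then
`inf { D(l₁, l) : l ∈ l₂ᵒ } = inf { D(Θ_r l₁, l) : l ∈ l₂ᵒ }`. -/
theorem infDist_shift_invariant (l1 l2 : BasedLoop S) (r : ℝ) (hr : r ∈ Ico 0 l1.len)
    (hcont : Tendsto l1.f (𝓝[<] r) (𝓝 (l1.f r))) :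
    sInf {x | ∃ l : BasedLoop S, (loopSetoid S).r l l2 ∧ x = loopDist l1 l} =
      sInf {x | ∃ l : BasedLoop S, (loopSetoid S).r l l2 ∧ x = loopDist (l1.shift r) l} :=
  infDist_shift_invariant_general l1 l2 r hr
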